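/- arXiv:2605.03113 — 3 statements merged into one kernel-verified Lean document; each statement's English description precedes it below -/
import Mathlib

section
/- Coherence theorem for unitless lax linearly distributive categories: the free unitless lax LD category on any type S is thin. Precisely, let 𝓕 be a lax LD category together with a function η : S → Ob(𝓕) satisfying the universal property of the free lax LD category on S; then for all objects X, Y of 𝓕 there is at most one morphism X → Y. -/
open CategoryTheory

namespace LaxLDCoherence

universe v u v₁ u₁ v₂ u₂

/-- A (unitless) lax linearly distributive category structure on a category `C`:
the associators are not required to be invertible. -/
structure LaxLD (C : Type u) [Category.{v} C] where
  ot : C → C → C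
  pa : C → C → C
  otHom : ∀ {X₁ Y₁ X₂ Y₂ : C}, (X₁ ⟶ Y₁) → (X₂ ⟶ Y₂) → (ot X₁ X₂ ⟶ ot Y₁ Y₂)
  paHom : ∀ {X₁ Y₁ X₂ Y₂ : C}, (X₁ ⟶ Y₁) → (X₂ ⟶ Y₂) → (pa X₁ X₂ ⟶ pa Y₁ Y₂)
  otHom_id : ∀ X Y : C, otHom (𝟙 X) (𝟙 Y) = 𝟙 (ot X Y)
  otHom_comp :
    ∀ {X₁ Y₁ Z₁ X₂ Y₂ Z₂ : C} (f₁ : X₁ ⟶ Y₁) (g₁ : Y₁ ⟶ Z₁) (f₂ : X₂ ⟶ Y₂) (g₂ : Y₂ ⟶ Z₂),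
      otHom (f₁ ≫ g₁) (f₂ ≫ g₂) = otHom f₁ f₂ ≫ otHom g₁ g₂
  paHom_id : ∀ X Y : C, paHom (𝟙 X) (𝟙 Y) = 𝟙 (pa X Y)
  paHom_comp :
    ∀ {X₁ Y₁ Z₁ X₂ Y₂ Z₂ : C} (f₁ : X₁ ⟶ Y₁) (g₁ : Y₁ ⟶ Z₁) (f₂ : X₂ ⟶ Y₂) (g₂ : Y₂ ⟶ Z₂),
      paHom (f₁ ≫ g₁) (f₂ ≫ g₂) = paHom f₁ f₂ ≫ paHom g₁ g₂
  α : ∀ A B E : C, ot A (ot B E) ⟶ ot (ot A B) E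
  pα : ∀ A B E : C, pa A (pa B E) ⟶ pa (pa A B) E
  δl : ∀ A B E : C, ot A (pa B E) ⟶ pa (ot A B) E
  δr : ∀ A B E : C, ot (pa A B) E ⟶ pa A (ot B E)
  α_natural :
    ∀ {A A' B B' E E' : C} (f : A ⟶ A') (g : B ⟶ B') (h : E ⟶ E'),
      otHom f (otHom g h) ≫ α A' B' E' = α A B E ≫ otHom (otHom f g) h
  pα_natural :
    ∀ {A A' B B' E E' : C} (f : A ⟶ A') (g : B ⟶ B') (h : E ⟶ E'),
      paHom f (paHom g h) ≫ pα A' B' E' = pα A B E ≫ paHom (paHom f g) h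
  δl_natural :
    ∀ {A A' B B' E E' : C} (f : A ⟶ A') (g : B ⟶ B') (h : E ⟶ E'),
      otHom f (paHom g h) ≫ δl A' B' E' = δl A B E ≫ paHom (otHom f g) h
  δr_natural :
    ∀ {A A' B B' E E' : C} (f : A ⟶ A') (g : B ⟶ B') (h : E ⟶ E'),
      otHom (paHom f g) h ≫ δr A' B' E' = δr A B E ≫ paHom f (otHom g h)
  P1 : ∀ A B E D : C,
    α A B (ot E D) ≫ α (ot A B) E D =
      otHom (𝟙 A) (α B E D) ≫ α A (ot B E) D ≫ otHom (α A B E) (𝟙 D)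
  P2 : ∀ A B E D : C,
    α A B (pa E D) ≫ δl (ot A B) E D =
      otHom (𝟙 A) (δl B E D) ≫ δl A (ot B E) D ≫ paHom (α A B E) (𝟙 D)
  P3 : ∀ A B E D : C,
    otHom (𝟙 A) (δr B E D) ≫ δl A B (ot E D) =
      α A (pa B E) D ≫ otHom (δl A B E) (𝟙 D) ≫ δr (ot A B) E D
  P4 : ∀ A B E D : C,
    δl A B (pa E D) ≫ pα (ot A B) E D =
      otHom (𝟙 A) (pα B E D) ≫ δl A (pa B E) D ≫ paHom (δl A B E) (𝟙 D)
  P5 : ∀ A B E D : C,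
    δr A B (ot E D) ≫ paHom (𝟙 A) (α B E D) =
      α (pa A B) E D ≫ otHom (δr A B E) (𝟙 D) ≫ δr A (ot B E) D
  P6 : ∀ A B E D : C,
    δl (pa A B) E D ≫ paHom (δr A B E) (𝟙 D) =
      δr A B (pa E D) ≫ paHom (𝟙 A) (δl B E D) ≫ pα A (ot B E) D
  P7 : ∀ A B E D : C,
    otHom (pα A B E) (𝟙 D) ≫ δr (pa A B) E D =
      δr A (pa B E) D ≫ paHom (𝟙 A) (δr B E D) ≫ pα A B (ot E D)
  P8 : ∀ A B E D : C,
    pα A B (pa E D) ≫ pα (pa A B) E D =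
      paHom (𝟙 A) (pα B E D) ≫ pα A (pa B E) D ≫ paHom (pα A B E) (𝟙 D)

/-- A strict functor of lax LD categories. -/
structure StrictLaxLDFunctor (Cc : Type u₁) [Category.{v₁} Cc] (Dd : Type u₂) [Category.{v₂} Dd]
    (LC : LaxLD Cc) (LDd : LaxLD Dd) where
  toFunctor : Cc ⥤ Dd
  obj_ot : ∀ X Y : Cc, toFunctor.obj (LC.ot X Y) = LDd.ot (toFunctor.obj X) (toFunctor.obj Y)
  obj_pa : ∀ X Y : Cc, toFunctor.obj (LC.pa X Y) = LDd.pa (toFunctor.obj X) (toFunctor.obj Y)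
  map_ot : ∀ {X₁ Y₁ X₂ Y₂ : Cc} (f : X₁ ⟶ Y₁) (g : X₂ ⟶ Y₂),
    toFunctor.map (LC.otHom f g) =
      eqToHom (obj_ot X₁ X₂) ≫ LDd.otHom (toFunctor.map f) (toFunctor.map g) ≫
        eqToHom (obj_ot Y₁ Y₂).symm
  map_pa : ∀ {X₁ Y₁ X₂ Y₂ : Cc} (f : X₁ ⟶ Y₁) (g : X₂ ⟶ Y₂),
    toFunctor.map (LC.paHom f g) =
      eqToHom (obj_pa X₁ X₂) ≫ LDd.paHom (toFunctor.map f) (toFunctor.map g) ≫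
        eqToHom (obj_pa Y₁ Y₂).symm
  map_α : ∀ A B E : Cc,
    toFunctor.map (LC.α A B E) =
      eqToHom (by simp only [obj_ot]) ≫
        LDd.α (toFunctor.obj A) (toFunctor.obj B) (toFunctor.obj E) ≫
        eqToHom (by simp only [obj_ot])
  map_pα : ∀ A B E : Cc,
    toFunctor.map (LC.pα A B E) =
      eqToHom (by simp only [obj_pa]) ≫
        LDd.pα (toFunctor.obj A) (toFunctor.obj B) (toFunctor.obj E) ≫
        eqToHom (by simp only [obj_pa])
  map_δl : ∀ A B E : Cc,
    toFunctor.map (LC.δl A B E) =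
      eqToHom (by simp only [obj_ot, obj_pa]) ≫
        LDd.δl (toFunctor.obj A) (toFunctor.obj B) (toFunctor.obj E) ≫
        eqToHom (by simp only [obj_ot, obj_pa])
  map_δr : ∀ A B E : Cc,
    toFunctor.map (LC.δr A B E) =
      eqToHom (by simp only [obj_ot, obj_pa]) ≫
        LDd.δr (toFunctor.obj A) (toFunctor.obj B) (toFunctor.obj E) ≫
        eqToHom (by simp only [obj_ot, obj_pa])

/-!
A rewrite path between formulas in `⊗` and `⅋` is a sequence of structure maps applied inside
contexts; a lax LD category `C` with a valuation of the atoms evaluates it to a morphism of `C`.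
Coherence says that this value depends only on the endpoints of the path.

A *split* of `Z` along a connective `k` is a canonical path `Z ⟶ U ⊛ₖ V`, built from `α` or `pα`
along the right spine of `Z` and, for `⅋`, from `δl` and `δr` pulling a `⅋` out of either side of
a `⊗`. A rewrite step followed by a split equals a split followed by paths inside `U` and `V`: the
naturality squares and the eight pentagons are exactly what is needed. Hence every path into
`Y₁ ⊛ₖ Y₂` is a split followed by the tensor of a path into `Y₁` and a path into `Y₂`. The split
is determined by `|Y₁|`, so two parallel paths agree by induction on the size of their source.

For the free category `F`: formulas preordered by rewritability form a thin lax LD category, and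
coherence makes evaluation in `F` a strict functor out of it. By freeness the composite
`F ⥤ formulas ⥤ F` is the identity, so `F` embeds faithfully into a thin category.
-/

inductive Connective
  | ot
  | pa

namespace LaxLD

attribute [simp] otHom_id paHom_id

variable {C : Type u} [Category.{v} C] (L : LaxLD C)

@[simp]
lemma otHom_comp_otHom {X₁ Y₁ Z₁ X₂ Y₂ Z₂ : C}
    (f₁ : X₁ ⟶ Y₁) (g₁ : Y₁ ⟶ Z₁) (f₂ : X₂ ⟶ Y₂) (g₂ : Y₂ ⟶ Z₂) :
    L.otHom f₁ f₂ ≫ L.otHom g₁ g₂ = L.otHom (f₁ ≫ g₁) (f₂ ≫ g₂) :=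
  (L.otHom_comp f₁ g₁ f₂ g₂).symm

@[simp]
lemma otHom_comp_otHom_assoc {X₁ Y₁ Z₁ X₂ Y₂ Z₂ W : C}
    (f₁ : X₁ ⟶ Y₁) (g₁ : Y₁ ⟶ Z₁) (f₂ : X₂ ⟶ Y₂) (g₂ : Y₂ ⟶ Z₂) (h : L.ot Z₁ Z₂ ⟶ W) :
    L.otHom f₁ f₂ ≫ L.otHom g₁ g₂ ≫ h = L.otHom (f₁ ≫ g₁) (f₂ ≫ g₂) ≫ h := by
  rw [← Category.assoc, otHom_comp_otHom]

@[simp]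
lemma paHom_comp_paHom {X₁ Y₁ Z₁ X₂ Y₂ Z₂ : C}
    (f₁ : X₁ ⟶ Y₁) (g₁ : Y₁ ⟶ Z₁) (f₂ : X₂ ⟶ Y₂) (g₂ : Y₂ ⟶ Z₂) :
    L.paHom f₁ f₂ ≫ L.paHom g₁ g₂ = L.paHom (f₁ ≫ g₁) (f₂ ≫ g₂) :=
  (L.paHom_comp f₁ g₁ f₂ g₂).symm

@[simp]
lemma paHom_comp_paHom_assoc {X₁ Y₁ Z₁ X₂ Y₂ Z₂ W : C}
    (f₁ : X₁ ⟶ Y₁) (g₁ : Y₁ ⟶ Z₁) (f₂ : X₂ ⟶ Y₂) (g₂ : Y₂ ⟶ Z₂) (h : L.pa Z₁ Z₂ ⟶ W) :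
    L.paHom f₁ f₂ ≫ L.paHom g₁ g₂ ≫ h = L.paHom (f₁ ≫ g₁) (f₂ ≫ g₂) ≫ h := by
  rw [← Category.assoc, paHom_comp_paHom]

abbrev tensor : Connective → C → C → C
  | .ot => L.ot
  | .pa => L.pa

def tensorHom : ∀ (k : Connective) {X₁ Y₁ X₂ Y₂ : C},
    (X₁ ⟶ Y₁) → (X₂ ⟶ Y₂) → (L.tensor k X₁ X₂ ⟶ L.tensor k Y₁ Y₂)
  | .ot => L.otHom
  | .pa => L.paHom

def assoc : ∀ (k : Connective) (A B E : C),
    L.tensor k A (L.tensor k B E) ⟶ L.tensor k (L.tensor k A B) E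
  | .ot => L.α
  | .pa => L.pα

@[simp]
lemma tensorHom_ot {X₁ Y₁ X₂ Y₂ : C} (f : X₁ ⟶ Y₁) (g : X₂ ⟶ Y₂) :
    L.tensorHom .ot f g = L.otHom f g := rfl

@[simp]
lemma tensorHom_pa {X₁ Y₁ X₂ Y₂ : C} (f : X₁ ⟶ Y₁) (g : X₂ ⟶ Y₂) :
    L.tensorHom .pa f g = L.paHom f g := rfl

@[simp] lemma assoc_ot (A B E : C) : L.assoc .ot A B E = L.α A B E := rfl

@[simp] lemma assoc_pa (A B E : C) : L.assoc .pa A B E = L.pα A B E := rfl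

@[simp]
lemma tensorHom_id (k : Connective) (X Y : C) : L.tensorHom k (𝟙 X) (𝟙 Y) = 𝟙 _ := by
  cases k
  exacts [L.otHom_id X Y, L.paHom_id X Y]

@[simp]
lemma tensorHom_comp_tensorHom (k : Connective) {X₁ Y₁ Z₁ X₂ Y₂ Z₂ : C}
    (f₁ : X₁ ⟶ Y₁) (g₁ : Y₁ ⟶ Z₁) (f₂ : X₂ ⟶ Y₂) (g₂ : Y₂ ⟶ Z₂) :
    L.tensorHom k f₁ f₂ ≫ L.tensorHom k g₁ g₂ = L.tensorHom k (f₁ ≫ g₁) (f₂ ≫ g₂) := by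
  cases k <;> simp

@[simp]
lemma tensorHom_comp_tensorHom_assoc (k : Connective) {X₁ Y₁ Z₁ X₂ Y₂ Z₂ W : C}
    (f₁ : X₁ ⟶ Y₁) (g₁ : Y₁ ⟶ Z₁) (f₂ : X₂ ⟶ Y₂) (g₂ : Y₂ ⟶ Z₂) (h : L.tensor k Z₁ Z₂ ⟶ W) :
    L.tensorHom k f₁ f₂ ≫ L.tensorHom k g₁ g₂ ≫ h = L.tensorHom k (f₁ ≫ g₁) (f₂ ≫ g₂) ≫ h := by
  rw [← Category.assoc, tensorHom_comp_tensorHom]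

lemma assoc_natural (k : Connective) {A A' B B' E E' : C} (f : A ⟶ A') (g : B ⟶ B')
    (h : E ⟶ E') :
    L.tensorHom k f (L.tensorHom k g h) ≫ L.assoc k A' B' E' =
      L.assoc k A B E ≫ L.tensorHom k (L.tensorHom k f g) h := by
  cases k
  exacts [L.α_natural f g h, L.pα_natural f g h]

lemma pentagon (k : Connective) (A B E D : C) :
    L.assoc k A B (L.tensor k E D) ≫ L.assoc k (L.tensor k A B) E D =
      L.tensorHom k (𝟙 A) (L.assoc k B E D) ≫ L.assoc k A (L.tensor k B E) D ≫
        L.tensorHom k (L.assoc k A B E) (𝟙 D) := by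
  cases k
  exacts [L.P1 A B E D, L.P8 A B E D]

/-! Each pentagon with the variable through which a split passes replaced by a morphism `d` into
a tensor: these are the squares along which a structure map moves past a split. -/

lemma pentagon_of_hom (k : Connective) (A B : C) {E C₁ C₂ : C} (d : E ⟶ L.tensor k C₁ C₂) :
    L.assoc k A B E ≫ L.tensorHom k (𝟙 (L.tensor k A B)) d ≫ L.assoc k (L.tensor k A B) C₁ C₂ =
      L.tensorHom k (𝟙 A) (L.tensorHom k (𝟙 B) d ≫ L.assoc k B C₁ C₂) ≫
        L.assoc k A (L.tensor k B C₁) C₂ ≫ L.tensorHom k (L.assoc k A B C₁) (𝟙 C₂) := by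
  rw [← L.tensorHom_id k A B, ← Category.assoc, ← L.assoc_natural, Category.assoc, L.pentagon]
  simp

lemma P2_of_hom (A B : C) {E C₁ C₂ : C} (d : E ⟶ L.pa C₁ C₂) :
    L.α A B E ≫ L.otHom (𝟙 (L.ot A B)) d ≫ L.δl (L.ot A B) C₁ C₂ =
      L.otHom (𝟙 A) (L.otHom (𝟙 B) d ≫ L.δl B C₁ C₂) ≫ L.δl A (L.ot B C₁) C₂ ≫
        L.paHom (L.α A B C₁) (𝟙 C₂) := by
  rw [← L.otHom_id A B, ← Category.assoc, ← L.α_natural, Category.assoc, L.P2]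
  simp

lemma P3_of_hom (A : C) {B B₁ B₂ : C} (d : B ⟶ L.pa B₁ B₂) (E : C) :
    L.α A B E ≫ L.otHom (L.otHom (𝟙 A) d ≫ L.δl A B₁ B₂) (𝟙 E) ≫ L.δr (L.ot A B₁) B₂ E =
      L.otHom (𝟙 A) (L.otHom d (𝟙 E) ≫ L.δr B₁ B₂ E) ≫ L.δl A B₁ (L.ot B₂ E) := by
  have h := L.α_natural (𝟙 A) d (𝟙 E) =≫
    (L.otHom (L.δl A B₁ B₂) (𝟙 E) ≫ L.δr (L.ot A B₁) B₂ E)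
  simp only [Category.assoc, otHom_comp_otHom_assoc, Category.comp_id] at h
  rw [← h, ← L.P3]
  simp

lemma P4_of_hom (A B : C) {E C₁ C₂ : C} (d : E ⟶ L.pa C₁ C₂) :
    L.δl A B E ≫ L.paHom (𝟙 (L.ot A B)) d ≫ L.pα (L.ot A B) C₁ C₂ =
      L.otHom (𝟙 A) (L.paHom (𝟙 B) d ≫ L.pα B C₁ C₂) ≫ L.δl A (L.pa B C₁) C₂ ≫
        L.paHom (L.δl A B C₁) (𝟙 C₂) := by
  rw [← L.otHom_id A B, ← Category.assoc, ← L.δl_natural, Category.assoc, L.P4]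
  simp

lemma P5_of_hom {A A₁ A₂ : C} (d : A ⟶ L.pa A₁ A₂) (B E : C) :
    L.α A B E ≫ L.otHom (L.otHom d (𝟙 B) ≫ L.δr A₁ A₂ B) (𝟙 E) ≫ L.δr A₁ (L.ot A₂ B) E =
      L.otHom d (𝟙 (L.ot B E)) ≫ L.δr A₁ A₂ (L.ot B E) ≫ L.paHom (𝟙 A₁) (L.α A₂ B E) := by
  have h := L.α_natural d (𝟙 B) (𝟙 E) =≫
    (L.otHom (L.δr A₁ A₂ B) (𝟙 E) ≫ L.δr A₁ (L.ot A₂ B) E)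
  simp only [Category.assoc, otHom_id, otHom_comp_otHom_assoc, Category.comp_id] at h
  rw [← h, ← L.P5]

lemma P6_of_hom (A B : C) {E C₁ C₂ : C} (d : E ⟶ L.pa C₁ C₂) :
    L.δr A B E ≫ L.paHom (𝟙 A) (L.otHom (𝟙 B) d ≫ L.δl B C₁ C₂) ≫ L.pα A (L.ot B C₁) C₂ =
      L.otHom (𝟙 (L.pa A B)) d ≫ L.δl (L.pa A B) C₁ C₂ ≫ L.paHom (L.δr A B C₁) (𝟙 C₂) := by
  have h := L.δr_natural (𝟙 A) (𝟙 B) d =≫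
    (L.paHom (𝟙 A) (L.δl B C₁ C₂) ≫ L.pα A (L.ot B C₁) C₂)
  simp only [Category.assoc, paHom_id, paHom_comp_paHom_assoc, Category.comp_id] at h
  rw [← h, ← L.P6]

lemma P7_of_hom (A : C) {B B₁ B₂ : C} (d : B ⟶ L.pa B₁ B₂) (E : C) :
    L.δr A B E ≫ L.paHom (𝟙 A) (L.otHom d (𝟙 E) ≫ L.δr B₁ B₂ E) ≫ L.pα A B₁ (L.ot B₂ E) =
      L.otHom (L.paHom (𝟙 A) d ≫ L.pα A B₁ B₂) (𝟙 E) ≫ L.δr (L.pa A B₁) B₂ E := by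
  have h := L.δr_natural (𝟙 A) d (𝟙 E) =≫
    (L.paHom (𝟙 A) (L.δr B₁ B₂ E) ≫ L.pα A B₁ (L.ot B₂ E))
  simp only [Category.assoc, paHom_comp_paHom_assoc, Category.comp_id] at h
  rw [← h, ← L.P7]
  simp

end LaxLD

variable {S : Type u}

inductive Formula (S : Type u) : Type u
  | atom (s : S)
  | node (k : Connective) (A B : Formula S)

namespace Formula

def size : Formula S → ℕ
  | atom _ => 1
  | node _ A B => A.size + B.size

lemma size_pos : ∀ X : Formula S, 0 < X.size
  | atom _ => Nat.one_pos
  | node _ A _ => Nat.add_pos_left A.size_pos _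

end Formula

open Formula

inductive Step : Formula S → Formula S → Type u
  | assoc (k : Connective) (A B C : Formula S) :
      Step (node k A (node k B C)) (node k (node k A B) C)
  | δl (A B C : Formula S) : Step (node .ot A (node .pa B C)) (node .pa (node .ot A B) C)
  | δr (A B C : Formula S) : Step (node .ot (node .pa A B) C) (node .pa A (node .ot B C))
  | left (k : Connective) {A A' : Formula S} (B : Formula S) :
      Step A A' → Step (node k A B) (node k A' B)
  | right (k : Connective) (A : Formula S) {B B' : Formula S} :
      Step B B' → Step (node k A B) (node k A B')

inductive Path : Formula S → Formula S → Type u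
  | refl (X : Formula S) : Path X X
  | cons {X Y Z : Formula S} : Step X Y → Path Y Z → Path X Z

lemma Step.size_eq {X Y : Formula S} (c : Step X Y) : Y.size = X.size := by
  induction c <;> simp only [Formula.size, *] <;> omega

namespace Path

lemma size_eq {X Y : Formula S} (p : Path X Y) : Y.size = X.size := by
  induction p with
  | refl => rfl
  | cons c _ ih => rw [ih, c.size_eq]

instance subsingleton_atom (s : S) (Y : Formula S) : Subsingleton (Path (atom s) Y) :=
  ⟨fun p q => by
    cases p with
    | refl =>
      cases q with
      | refl => rfl
      | cons c _ => cases c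
    | cons c _ => cases c⟩

def single {X Y : Formula S} (c : Step X Y) : Path X Y := .cons c (.refl Y)

def comp {X Y Z : Formula S} : Path X Y → Path Y Z → Path X Z
  | .refl _, q => q
  | .cons c p, q => .cons c (p.comp q)

def left (k : Connective) {A A' : Formula S} (B : Formula S) :
    Path A A' → Path (.node k A B) (.node k A' B)
  | .refl _ => .refl _
  | .cons c p => .cons (.left k B c) (p.left k B)

def right (k : Connective) (A : Formula S) {B B' : Formula S} :
    Path B B' → Path (.node k A B) (.node k A B')
  | .refl _ => .refl _
  | .cons c p => .cons (.right k A c) (p.right k A)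

def node (k : Connective) {A A' B B' : Formula S} (p : Path A A') (q : Path B B') :
    Path (.node k A B) (.node k A' B') :=
  (p.left k B).comp (q.right k A')

end Path

inductive Split : Connective → Formula S → Formula S → Formula S → Type u
  | root (k : Connective) (A B : Formula S) : Split k (node k A B) A B
  | right (k : Connective) (A : Formula S) {B C D : Formula S} :
      Split k B C D → Split k (node k A B) (node k A C) D
  | otL {A C D : Formula S} (B : Formula S) :
      Split .pa A C D → Split .pa (node .ot A B) C (node .ot D B)
  | otR (A : Formula S) {B C D : Formula S} :
      Split .pa B C D → Split .pa (node .ot A B) (node .ot A C) D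

namespace Split

lemma size_add {k : Connective} {Z U V : Formula S} (D : Split k Z U V) :
    U.size + V.size = Z.size := by
  induction D <;> simp only [Formula.size] at * <;> omega

lemma eq_of_size_eq {k : Connective} {Z U V U' V' : Formula S} (D : Split k Z U V)
    (D' : Split k Z U' V') (h : U.size = U'.size) : U = U' ∧ V = V' := by
  induction D generalizing U' V' with
  | root k A B =>
    cases D' with
    | root => exact ⟨rfl, rfl⟩
    | @right _ _ _ C _ _ => have := C.size_pos; simp only [Formula.size] at h; omega
  | @right k A _ C _ _ ih =>
    cases D' with
    | root => have := C.size_pos; simp only [Formula.size] at h; omega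
    | right _ _ D₀' =>
      obtain ⟨rfl, rfl⟩ := ih D₀' (by simp only [Formula.size] at h; omega)
      exact ⟨rfl, rfl⟩
  | @otL A C V B D₀ ih =>
    cases D' with
    | otL _ D₀' =>
      obtain ⟨rfl, rfl⟩ := ih D₀' h
      exact ⟨rfl, rfl⟩
    | otR _ _ => have := D₀.size_add; have := V.size_pos; simp only [Formula.size] at h; omega
  | otR A D₀ ih =>
    cases D' with
    | @otL _ _ V' _ D₀' =>
      have := D₀'.size_add; have := V'.size_pos; simp only [Formula.size] at h; omega
    | otR _ D₀' =>
      obtain ⟨rfl, rfl⟩ := ih D₀' (by simp only [Formula.size] at h; omega)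
      exact ⟨rfl, rfl⟩

end Split

section Evaluation

variable {C : Type u₁} [Category.{v₁} C] (L : LaxLD C) (val : S → C)

abbrev Formula.interp : Formula S → C
  | atom s => val s
  | node k A B => L.tensor k A.interp B.interp

def Step.ev : ∀ {X Y : Formula S}, Step X Y → (X.interp L val ⟶ Y.interp L val)
  | _, _, .assoc k _ _ _ => L.assoc k _ _ _
  | _, _, .δl _ _ _ => L.δl _ _ _
  | _, _, .δr _ _ _ => L.δr _ _ _
  | _, _, .left k _ c => L.tensorHom k c.ev (𝟙 _)
  | _, _, .right k _ c => L.tensorHom k (𝟙 _) c.ev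

def Path.ev : ∀ {X Y : Formula S}, Path X Y → (X.interp L val ⟶ Y.interp L val)
  | _, _, .refl _ => 𝟙 _
  | _, _, .cons c p => c.ev L val ≫ p.ev

def Split.ev : ∀ {k : Connective} {Z U V : Formula S}, Split k Z U V →
    (Z.interp L val ⟶ (node k U V).interp L val)
  | _, _, _, _, .root _ _ _ => 𝟙 _
  | _, _, _, _, .right k _ D => L.tensorHom k (𝟙 _) D.ev ≫ L.assoc k _ _ _
  | _, _, _, _, .otL _ D => L.otHom D.ev (𝟙 _) ≫ L.δr _ _ _
  | _, _, _, _, .otR _ D => L.otHom (𝟙 _) D.ev ≫ L.δl _ _ _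

namespace Path

@[simp]
lemma ev_refl (X : Formula S) : (Path.refl X).ev L val = 𝟙 _ := rfl

@[simp]
lemma ev_cons {X Y Z : Formula S} (c : Step X Y) (p : Path Y Z) :
    (Path.cons c p).ev L val = c.ev L val ≫ p.ev L val := rfl

@[simp]
lemma ev_single {X Y : Formula S} (c : Step X Y) : (single c).ev L val = c.ev L val := by
  simp [single]

@[simp]
lemma ev_comp {X Y Z : Formula S} (p : Path X Y) (q : Path Y Z) :
    (p.comp q).ev L val = p.ev L val ≫ q.ev L val := by
  induction p <;> simp [comp, *]

@[simp]
lemma ev_left (k : Connective) {A A' : Formula S} (B : Formula S) (p : Path A A') :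
    (p.left k B).ev L val = L.tensorHom k (p.ev L val) (𝟙 _) := by
  induction p <;> simp [left, Step.ev, *]

@[simp]
lemma ev_right (k : Connective) (A : Formula S) {B B' : Formula S} (p : Path B B') :
    (p.right k A).ev L val = L.tensorHom k (𝟙 _) (p.ev L val) := by
  induction p <;> simp [right, Step.ev, *]

@[simp]
lemma ev_node (k : Connective) {A A' B B' : Formula S} (p : Path A A') (q : Path B B') :
    (p.node k q).ev L val = L.tensorHom k (p.ev L val) (q.ev L val) := by
  simp [node]

end Path

lemma Split.ev_eq {k : Connective} {Z U V : Formula S} (D D' : Split k Z U V) :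
    D.ev L val = D'.ev L val := by
  induction D with
  | root => cases D'; rfl
  | right k A D₀ ih =>
    cases D' with
    | right _ _ D₀' => simp only [ev, ih D₀']
  | @otL A _ V B D₀ ih =>
    cases D' with
    | otL _ D₀' => simp only [ev, ih D₀']
    | @otR _ _ C' _ _ =>
      have := D₀.size_add; have := C'.size_pos; have := V.size_pos
      simp only [Formula.size] at *; omega
  | otR A D₀ ih =>
    cases D' with
    | @otL _ _ V _ D₀' =>
      have := D₀'.size_add; have := V.size_pos; simp only [Formula.size] at *; omega
    | otR _ D₀' => simp only [ev, ih D₀']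

def FactorsThroughSplit (k : Connective) {Z U' V' : Formula S}
    (f : Z.interp L val ⟶ (node k U' V').interp L val) : Prop :=
  ∃ (U V : Formula S) (D : Split k Z U V) (p : Path U U') (q : Path V V'),
    f = D.ev L val ≫ L.tensorHom k (p.ev L val) (q.ev L val)

end Evaluation

section Coherence

variable {C : Type u₁} [Category.{v₁} C] {L : LaxLD C} {val : S → C}

lemma FactorsThroughSplit.comp_tensorHom {k : Connective} {Z U' V' U'' V'' : Formula S}
    {f : Z.interp L val ⟶ (node k U' V').interp L val} (h : FactorsThroughSplit L val k f)
    (p : Path U' U'') (q : Path V' V'') :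
    FactorsThroughSplit L val k (f ≫ L.tensorHom k (p.ev L val) (q.ev L val)) := by
  obtain ⟨U, V, D, p₀, q₀, rfl⟩ := h
  exact ⟨U, V, D, p₀.comp p, q₀.comp q, by simp⟩

lemma factorsThroughSplit_assoc_comp (j : Connective) (A B E : Formula S) {k : Connective}
    {U' V' : Formula S} (D' : Split k (node j (node j A B) E) U' V') :
    FactorsThroughSplit L val k ((Step.assoc j A B E).ev L val ≫ D'.ev L val) := by
  cases D' with
  | root => exact ⟨_, _, .right j A (.root j B E), .refl _, .refl _, by simp [Split.ev, Step.ev]⟩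
  | right _ _ D₁ =>
    refine ⟨_, _, .right j A (.right j B D₁), .single (.assoc j A B _), .refl _, ?_⟩
    simpa [Split.ev, Step.ev] using L.pentagon_of_hom j _ _ (D₁.ev L val)
  | otL _ D₁ =>
    cases D₁ with
    | otL _ D₂ =>
      refine ⟨_, _, .otL _ D₂, .refl _, .single (.assoc .ot _ B E), ?_⟩
      simpa [Split.ev, Step.ev] using L.P5_of_hom (D₂.ev L val) _ _
    | otR _ D₂ =>
      refine ⟨_, _, .otR A (.otL E D₂), .refl _, .refl _, ?_⟩
      simpa [Split.ev, Step.ev] using L.P3_of_hom _ (D₂.ev L val) _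
  | otR _ D₁ =>
    refine ⟨_, _, .otR A (.otR B D₁), .single (.assoc .ot A B _), .refl _, ?_⟩
    simpa [Split.ev, Step.ev] using L.P2_of_hom _ _ (D₁.ev L val)

lemma factorsThroughSplit_δl_comp (A B E : Formula S) {k : Connective} {U' V' : Formula S}
    (D' : Split k (node .pa (node .ot A B) E) U' V') :
    FactorsThroughSplit L val k ((Step.δl A B E).ev L val ≫ D'.ev L val) := by
  cases D' with
  | root => exact ⟨_, _, .otR A (.root .pa B E), .refl _, .refl _, by simp [Split.ev, Step.ev]⟩
  | right _ _ D₁ =>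
    refine ⟨_, _, .otR A (.right .pa B D₁), .single (.δl A B _), .refl _, ?_⟩
    simpa [Split.ev, Step.ev] using L.P4_of_hom _ _ (D₁.ev L val)

lemma factorsThroughSplit_δr_comp (A B E : Formula S) {k : Connective} {U' V' : Formula S}
    (D' : Split k (node .pa A (node .ot B E)) U' V') :
    FactorsThroughSplit L val k ((Step.δr A B E).ev L val ≫ D'.ev L val) := by
  cases D' with
  | root => exact ⟨_, _, .otL E (.root .pa A B), .refl _, .refl _, by simp [Split.ev, Step.ev]⟩
  | right _ _ D₁ =>
    cases D₁ with
    | otL _ D₂ =>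
      refine ⟨_, _, .otL E (.right .pa A D₂), .refl _, .refl _, ?_⟩
      simpa [Split.ev, Step.ev] using L.P7_of_hom _ (D₂.ev L val) _
    | otR _ D₂ =>
      refine ⟨_, _, .otR _ D₂, .single (.δr A B _), .refl _, ?_⟩
      simpa [Split.ev, Step.ev] using L.P6_of_hom _ _ (D₂.ev L val)

lemma factorsThroughSplit_left_comp (j : Connective) {A A' : Formula S} (B : Formula S)
    (s : Step A A')
    (ih : ∀ {k : Connective} {U' V' : Formula S} (D' : Split k A' U' V'),
      FactorsThroughSplit L val k (s.ev L val ≫ D'.ev L val))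
    {k : Connective} {U' V' : Formula S} (D' : Split k (node j A' B) U' V') :
    FactorsThroughSplit L val k ((Step.left j B s).ev L val ≫ D'.ev L val) := by
  cases D' with
  | root => exact ⟨_, _, .root j A B, .single s, .refl _, by simp [Split.ev, Step.ev]⟩
  | right _ _ D₀ =>
    refine ⟨_, _, .right j A D₀, .single (.left j _ s), .refl _, ?_⟩
    simp [Split.ev, Step.ev, ← L.assoc_natural]
  | otL _ D₀ =>
    obtain ⟨U, V, Ds, p, q, e⟩ := ih D₀
    refine ⟨_, _, .otL B Ds, p, q.left .ot B, ?_⟩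
    simp [Split.ev, Step.ev, e, ← L.δr_natural]
  | otR _ D₀ =>
    refine ⟨_, _, .otR A D₀, .single (.left .ot _ s), .refl _, ?_⟩
    simp [Split.ev, Step.ev, ← L.δl_natural]

lemma factorsThroughSplit_right_comp (j : Connective) (A : Formula S) {B B' : Formula S}
    (s : Step B B')
    (ih : ∀ {k : Connective} {U' V' : Formula S} (D' : Split k B' U' V'),
      FactorsThroughSplit L val k (s.ev L val ≫ D'.ev L val))
    {k : Connective} {U' V' : Formula S} (D' : Split k (node j A B') U' V') :
    FactorsThroughSplit L val k ((Step.right j A s).ev L val ≫ D'.ev L val) := by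
  cases D' with
  | root => exact ⟨_, _, .root j A B, .refl _, .single s, by simp [Split.ev, Step.ev]⟩
  | right _ _ D₀ =>
    obtain ⟨U, V, Ds, p, q, e⟩ := ih D₀
    refine ⟨_, _, .right j A Ds, p.right j A, q, ?_⟩
    simp [Split.ev, Step.ev, e, ← L.assoc_natural]
  | otL _ D₀ =>
    refine ⟨_, _, .otL B D₀, .refl _, .single (.right .ot _ s), ?_⟩
    simp [Split.ev, Step.ev, ← L.δr_natural]
  | otR _ D₀ =>
    obtain ⟨U, V, Ds, p, q, e⟩ := ih D₀
    refine ⟨_, _, .otR A Ds, p.right .ot A, q, ?_⟩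
    simp [Split.ev, Step.ev, e, ← L.δl_natural]

lemma Step.factorsThroughSplit_comp {Z Z' : Formula S} (c : Step Z Z') {k : Connective}
    {U' V' : Formula S} (D' : Split k Z' U' V') :
    FactorsThroughSplit L val k (c.ev L val ≫ D'.ev L val) := by
  induction c generalizing k U' V' with
  | assoc j A B E => exact factorsThroughSplit_assoc_comp j A B E D'
  | δl A B E => exact factorsThroughSplit_δl_comp A B E D'
  | δr A B E => exact factorsThroughSplit_δr_comp A B E D'
  | left j B s ih => exact factorsThroughSplit_left_comp j B s ih D'
  | right j A s ih => exact factorsThroughSplit_right_comp j A s ih D'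

lemma Path.factorsThroughSplit : ∀ {Z : Formula S} {k : Connective} {W₁ W₂ : Formula S}
    (p : Path Z (.node k W₁ W₂)), FactorsThroughSplit L val k (p.ev L val)
  | _, _, _, _, .refl _ => ⟨_, _, .root _ _ _, .refl _, .refl _, by simp [Split.ev]⟩
  | _, _, _, _, .cons c p => by
    obtain ⟨U, V, D, p₁, p₂, h⟩ := p.factorsThroughSplit
    rw [ev_cons, h, ← Category.assoc]
    exact (c.factorsThroughSplit_comp D).comp_tensorHom p₁ p₂

variable (L val) in
theorem Path.ev_eq {X Y : Formula S} (p q : Path X Y) : p.ev L val = q.ev L val := by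
  induction hX : X.size using Nat.strong_induction_on generalizing X Y with
  | _ n ih =>
  cases Y with
  | atom s =>
    cases X with
    | atom => rw [Subsingleton.elim p q]
    | node k A B =>
      have := p.size_eq; have := A.size_pos; have := B.size_pos
      simp only [Formula.size] at *; omega
  | node k Y₁ Y₂ =>
    obtain ⟨U, V, D, p₁, p₂, hp⟩ := p.factorsThroughSplit (L := L) (val := val)
    obtain ⟨U', V', D', q₁, q₂, hq⟩ := q.factorsThroughSplit (L := L) (val := val)
    obtain ⟨rfl, rfl⟩ := D.eq_of_size_eq D' (p₁.size_eq.symm.trans q₁.size_eq)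
    have := D.size_add; have := U.size_pos; have := V.size_pos
    rw [hp, hq, D.ev_eq L val D', ih _ (by omega) p₁ q₁ rfl, ih _ (by omega) p₂ q₂ rfl]

end Coherence

namespace StrictLaxLDFunctor

variable {C : Type u} [Category.{v} C] {D : Type u₁} [Category.{v₁} D]
  {E : Type u₂} [Category.{v₂} E] {LC : LaxLD C} {LD : LaxLD D} {LE : LaxLD E}

protected def id (LC : LaxLD C) : StrictLaxLDFunctor C C LC LC where
  toFunctor := 𝟭 C
  obj_ot _ _ := rfl
  obj_pa _ _ := rfl
  map_ot _ _ := by simp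
  map_pa _ _ := by simp
  map_α _ _ _ := by simp
  map_pα _ _ _ := by simp
  map_δl _ _ _ := by simp
  map_δr _ _ _ := by simp

def comp (G : StrictLaxLDFunctor C D LC LD) (H : StrictLaxLDFunctor D E LD LE) :
    StrictLaxLDFunctor C E LC LE where
  toFunctor := G.toFunctor ⋙ H.toFunctor
  obj_ot X Y := by simp [G.obj_ot, H.obj_ot]
  obj_pa X Y := by simp [G.obj_pa, H.obj_pa]
  map_ot f g := by simp [G.map_ot, H.map_ot, eqToHom_map]
  map_pa f g := by simp [G.map_pa, H.map_pa, eqToHom_map]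
  map_α A B E := by simp [G.map_α, H.map_α, eqToHom_map]
  map_pα A B E := by simp [G.map_pα, H.map_pα, eqToHom_map]
  map_δl A B E := by simp [G.map_δl, H.map_δl, eqToHom_map]
  map_δr A B E := by simp [G.map_δr, H.map_δr, eqToHom_map]

end StrictLaxLDFunctor

instance : Preorder (Formula S) where
  le X Y := Nonempty (Path X Y)
  le_refl X := ⟨.refl X⟩
  le_trans _ _ _ := fun ⟨p⟩ ⟨q⟩ => ⟨p.comp q⟩

abbrev Formula.laxLD : LaxLD (Formula S) where
  ot := node .ot
  pa := node .pa
  otHom f g := homOfLE ⟨(leOfHom f).some.node .ot (leOfHom g).some⟩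
  paHom f g := homOfLE ⟨(leOfHom f).some.node .pa (leOfHom g).some⟩
  otHom_id _ _ := rfl
  otHom_comp _ _ _ _ := rfl
  paHom_id _ _ := rfl
  paHom_comp _ _ _ _ := rfl
  α A B E := homOfLE ⟨.single (.assoc .ot A B E)⟩
  pα A B E := homOfLE ⟨.single (.assoc .pa A B E)⟩
  δl A B E := homOfLE ⟨.single (.δl A B E)⟩
  δr A B E := homOfLE ⟨.single (.δr A B E)⟩
  α_natural _ _ _ := rfl
  pα_natural _ _ _ := rfl
  δl_natural _ _ _ := rfl
  δr_natural _ _ _ := rfl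
  P1 _ _ _ _ := rfl
  P2 _ _ _ _ := rfl
  P3 _ _ _ _ := rfl
  P4 _ _ _ _ := rfl
  P5 _ _ _ _ := rfl
  P6 _ _ _ _ := rfl
  P7 _ _ _ _ := rfl
  P8 _ _ _ _ := rfl

noncomputable def Formula.evalFunctor {C : Type u₁} [Category.{v₁} C] (L : LaxLD C)
    (val : S → C) : StrictLaxLDFunctor (Formula S) C Formula.laxLD L where
  toFunctor :=
    { obj := interp L val
      map f := (leOfHom f).some.ev L val
      map_id X := (Path.ev_eq L val _ (.refl X)).trans (Path.ev_refl L val X)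
      map_comp f g := by rw [← Path.ev_comp]; exact Path.ev_eq L val _ _ }
  obj_ot _ _ := rfl
  obj_pa _ _ := rfl
  map_ot f g := by simpa using Path.ev_eq L val _ ((leOfHom f).some.node .ot (leOfHom g).some)
  map_pa f g := by simpa using Path.ev_eq L val _ ((leOfHom f).some.node .pa (leOfHom g).some)
  map_α A B E := by simpa [Step.ev] using Path.ev_eq L val _ (.single (.assoc .ot A B E))
  map_pα A B E := by simpa [Step.ev] using Path.ev_eq L val _ (.single (.assoc .pa A B E))
  map_δl A B E := by simpa [Step.ev] using Path.ev_eq L val _ (.single (.δl A B E))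
  map_δr A B E := by simpa [Step.ev] using Path.ev_eq L val _ (.single (.δr A B E))

/-- **Coherence theorem for unitless lax linearly distributive categories**:
the free unitless lax LD category on a set `S` is thin. -/
theorem free_unitless_lax_LD_category_is_thin
    (S : Type) (F : Type) [Category.{0} F] (LF : LaxLD F) (η : S → F)
    (hfree : ∀ (E : Type) [instE : Category.{0} E] (LE : LaxLD E) (f : S → E),
      ∃ G : StrictLaxLDFunctor F E LF LE,
        (∀ s : S, G.toFunctor.obj (η s) = f s) ∧
        ∀ G' : StrictLaxLDFunctor F E LF LE,
          (∀ s : S, G'.toFunctor.obj (η s) = f s) → G'.toFunctor = G.toFunctor) :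
    ∀ (X Y : F) (g h : X ⟶ Y), g = h := by
  intro X Y g h
  obtain ⟨G, hG, -⟩ := hfree (Formula S) Formula.laxLD Formula.atom
  obtain ⟨I, -, hI⟩ := hfree F LF η
  have hGE : G.toFunctor ⋙ (Formula.evalFunctor LF η).toFunctor = 𝟭 F :=
    (hI (G.comp (Formula.evalFunctor LF η)) fun s => congrArg (Formula.interp LF η) (hG s)).trans
      (hI (StrictLaxLDFunctor.id LF) fun _ => rfl).symm
  have := Functor.Faithful.of_comp_eq hGE
  exact G.toFunctor.map_injective (Subsingleton.elim _ _)

end LaxLDCoherence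
end

section
/- In a tidy LD category C, for every morphism f : H → L⊗R into an ⊗-product, the family (τ^f_u)_{u∈𝔜} satisfies the following six relations, as equalities of composites of components for all words u ∈ 𝔜 and all vectors of objects: (1) τ^f_{a·u}∘α = (α⊗id)∘τ^f_{a·a·u}, explicitly τ^f_{a·u}(A₁⊗A₂, Ā)∘α_{A₁,A₂,H^f_u(Ā)} = (α_{A₁,A₂,L^f_u(Ā)}⊗id_{R^f_u(Ā)})∘τ^f_{a·a·u}(A₁,A₂,Ā) for all objects A₁,A₂ and Ā ∈ Ob(C)^{|u|}; (2) τ^f_{a⁻¹·a·u}∘α = τ^f_{a·a⁻¹·u}; (3) τ^f_{a⁻¹·a⁻¹·u}∘α = (id⊗α)∘τ^f_{a⁻¹·u}; (4) τ^f_{a⁻¹·u}∘α⁻¹ = (id⊗α⁻¹)∘τ^f_{a⁻¹·a⁻¹·u}; (5) τ^f_{a·a⁻¹·u}∘α⁻¹ = τ^f_{a⁻¹·a·u}; (6) τ^f_{a·a·u}∘α⁻¹ = (α⁻¹⊗id)∘τ^f_{a·u}; in (2)–(6) the components of α, α⁻¹ and the identities are the evident ones making both sides parallel morphisms. -/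
open CategoryTheory

namespace LDCoherence

universe v u v₁ u₁ v₂ u₂

/-- A (unitless) linearly distributive category structure on a category `C`. -/
structure LD (C : Type u) [Category.{v} C] where
  ot : C → C → C
  pa : C → C → C
  otHom : ∀ {X₁ Y₁ X₂ Y₂ : C}, (X₁ ⟶ Y₁) → (X₂ ⟶ Y₂) → (ot X₁ X₂ ⟶ ot Y₁ Y₂)
  paHom : ∀ {X₁ Y₁ X₂ Y₂ : C}, (X₁ ⟶ Y₁) → (X₂ ⟶ Y₂) → (pa X₁ X₂ ⟶ pa Y₁ Y₂)
  otHom_id : ∀ X Y : C, otHom (𝟙 X) (𝟙 Y) = 𝟙 (ot X Y)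
  otHom_comp :
    ∀ {X₁ Y₁ Z₁ X₂ Y₂ Z₂ : C} (f₁ : X₁ ⟶ Y₁) (g₁ : Y₁ ⟶ Z₁) (f₂ : X₂ ⟶ Y₂) (g₂ : Y₂ ⟶ Z₂),
      otHom (f₁ ≫ g₁) (f₂ ≫ g₂) = otHom f₁ f₂ ≫ otHom g₁ g₂
  paHom_id : ∀ X Y : C, paHom (𝟙 X) (𝟙 Y) = 𝟙 (pa X Y)
  paHom_comp :
    ∀ {X₁ Y₁ Z₁ X₂ Y₂ Z₂ : C} (f₁ : X₁ ⟶ Y₁) (g₁ : Y₁ ⟶ Z₁) (f₂ : X₂ ⟶ Y₂) (g₂ : Y₂ ⟶ Z₂),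
      paHom (f₁ ≫ g₁) (f₂ ≫ g₂) = paHom f₁ f₂ ≫ paHom g₁ g₂
  α : ∀ A B E : C, ot A (ot B E) ⟶ ot (ot A B) E
  αInv : ∀ A B E : C, ot (ot A B) E ⟶ ot A (ot B E)
  pα : ∀ A B E : C, pa A (pa B E) ⟶ pa (pa A B) E
  pαInv : ∀ A B E : C, pa (pa A B) E ⟶ pa A (pa B E)
  δl : ∀ A B E : C, ot A (pa B E) ⟶ pa (ot A B) E
  δr : ∀ A B E : C, ot (pa A B) E ⟶ pa A (ot B E)
  α_αInv : ∀ A B E : C, α A B E ≫ αInv A B E = 𝟙 _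
  αInv_α : ∀ A B E : C, αInv A B E ≫ α A B E = 𝟙 _
  pα_pαInv : ∀ A B E : C, pα A B E ≫ pαInv A B E = 𝟙 _
  pαInv_pα : ∀ A B E : C, pαInv A B E ≫ pα A B E = 𝟙 _
  α_natural :
    ∀ {A A' B B' E E' : C} (f : A ⟶ A') (g : B ⟶ B') (h : E ⟶ E'),
      otHom f (otHom g h) ≫ α A' B' E' = α A B E ≫ otHom (otHom f g) h
  pα_natural :
    ∀ {A A' B B' E E' : C} (f : A ⟶ A') (g : B ⟶ B') (h : E ⟶ E'),
      paHom f (paHom g h) ≫ pα A' B' E' = pα A B E ≫ paHom (paHom f g) h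
  δl_natural :
    ∀ {A A' B B' E E' : C} (f : A ⟶ A') (g : B ⟶ B') (h : E ⟶ E'),
      otHom f (paHom g h) ≫ δl A' B' E' = δl A B E ≫ paHom (otHom f g) h
  δr_natural :
    ∀ {A A' B B' E E' : C} (f : A ⟶ A') (g : B ⟶ B') (h : E ⟶ E'),
      otHom (paHom f g) h ≫ δr A' B' E' = δr A B E ≫ paHom f (otHom g h)
  P1 : ∀ A B E D : C,
    α A B (ot E D) ≫ α (ot A B) E D =
      otHom (𝟙 A) (α B E D) ≫ α A (ot B E) D ≫ otHom (α A B E) (𝟙 D)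
  P2 : ∀ A B E D : C,
    α A B (pa E D) ≫ δl (ot A B) E D =
      otHom (𝟙 A) (δl B E D) ≫ δl A (ot B E) D ≫ paHom (α A B E) (𝟙 D)
  P3 : ∀ A B E D : C,
    otHom (𝟙 A) (δr B E D) ≫ δl A B (ot E D) =
      α A (pa B E) D ≫ otHom (δl A B E) (𝟙 D) ≫ δr (ot A B) E D
  P4 : ∀ A B E D : C,
    δl A B (pa E D) ≫ pα (ot A B) E D =
      otHom (𝟙 A) (pα B E D) ≫ δl A (pa B E) D ≫ paHom (δl A B E) (𝟙 D)
  P5 : ∀ A B E D : C,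
    δr A B (ot E D) ≫ paHom (𝟙 A) (α B E D) =
      α (pa A B) E D ≫ otHom (δr A B E) (𝟙 D) ≫ δr A (ot B E) D
  P6 : ∀ A B E D : C,
    δl (pa A B) E D ≫ paHom (δr A B E) (𝟙 D) =
      δr A B (pa E D) ≫ paHom (𝟙 A) (δl B E D) ≫ pα A (ot B E) D
  P7 : ∀ A B E D : C,
    otHom (pα A B E) (𝟙 D) ≫ δr (pa A B) E D =
      δr A (pa B E) D ≫ paHom (𝟙 A) (δr B E D) ≫ pα A B (ot E D)
  P8 : ∀ A B E D : C,
    pα A B (pa E D) ≫ pα (pa A B) E D =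
      paHom (𝟙 A) (pα B E D) ≫ pα A (pa B E) D ≫ paHom (pα A B E) (𝟙 D)

variable {C : Type u} [Category.{v} C]

/-- Tidiness of a linearly distributive category. -/
def LD.Tidy (L : LD C) : Prop :=
  (∀ A₁ A₂ B₁ B₂ : C, L.ot A₁ A₂ = L.ot B₁ B₂ → A₁ = B₁ ∧ A₂ = B₂) ∧
  (∀ A₁ A₂ B₁ B₂ : C, L.pa A₁ A₂ = L.pa B₁ B₂ → A₁ = B₁ ∧ A₂ = B₂) ∧
  (∀ A₁ A₂ B₁ B₂ : C, L.ot A₁ A₂ ≠ L.pa B₁ B₂)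

/-- Generators of the free monoid 𝔜. -/
inductive YGen : Type
  | a : YGen
  | ainv : YGen

/-- Generators of the free monoid 𝔝. -/
inductive ZGen : Type
  | pa : ZGen
  | painv : ZGen
  | dl : ZGen
  | dr : ZGen

/-- A word in the free monoid 𝔜 together with a matching vector of objects:
each letter carries the object of the vector that it consumes in the recursions
defining `H`, `L`, `R` and `τ`.  The outermost constructor is the terminal letter. -/
inductive YW (C : Type u) : Type u
  | nil : YW C
  | a : C → YW C → YW C
  | ainv : C → YW C → YW C

/-- The underlying word in 𝔜 of a word-with-vector. -/
def YW.word {C : Type u} : YW C → List YGen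
  | .nil => []
  | .a _ w => YGen.a :: w.word
  | .ainv _ w => YGen.ainv :: w.word

/-- A word in the free monoid 𝔝 together with a matching vector of objects. -/
inductive ZW (C : Type u) : Type u
  | nil : ZW C
  | pa : C → ZW C → ZW C
  | painv : C → ZW C → ZW C
  | dl : C → ZW C → ZW C
  | dr : C → ZW C → ZW C

/-- The underlying word in 𝔝 of a word-with-vector. -/
def ZW.word {C : Type u} : ZW C → List ZGen
  | .nil => []
  | .pa _ w => ZGen.pa :: w.word
  | .painv _ w => ZGen.painv :: w.word
  | .dl _ w => ZGen.dl :: w.word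
  | .dr _ w => ZGen.dr :: w.word

/-- The functor `H^f_u` (object part), for `f` with source `X` and target an ⊗-product. -/
def Hot (L : LD C) (X : C) : YW C → C
  | .nil => X
  | .a A w => L.ot A (Hot L X w)
  | .ainv A w => L.ot (Hot L X w) A

/-- The functor `L^f_u` (object part), for `f` with target `L.ot Y Z`. -/
def Lot (L : LD C) (Y : C) : YW C → C
  | .nil => Y
  | .a A w => L.ot A (Lot L Y w)
  | .ainv _ w => Lot L Y w

/-- The functor `R^f_u` (object part), for `f` with target `L.ot Y Z`. -/
def Rot (L : LD C) (Z : C) : YW C → C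
  | .nil => Z
  | .a _ w => Rot L Z w
  | .ainv A w => L.ot (Rot L Z w) A

/-- The natural transformation `τ^f_u` (componentwise). -/
def tau (L : LD C) {X Y Z : C} (f : X ⟶ L.ot Y Z) :
    (w : YW C) → (Hot L X w ⟶ L.ot (Lot L Y w) (Rot L Z w))
  | .nil => f
  | .a A w => L.otHom (𝟙 A) (tau L f w) ≫ L.α A (Lot L Y w) (Rot L Z w)
  | .ainv A w => L.otHom (tau L f w) (𝟙 A) ≫ L.αInv (Lot L Y w) (Rot L Z w) A

/-- The functor `H^f_u` (object part), for `f` with source `X` and target a ⅋-product. -/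
def Hpa (L : LD C) (X : C) : ZW C → C
  | .nil => X
  | .pa A w => L.pa A (Hpa L X w)
  | .painv A w => L.pa (Hpa L X w) A
  | .dl A w => L.ot A (Hpa L X w)
  | .dr A w => L.ot (Hpa L X w) A

/-- The functor `L^f_u` (object part), for `f` with target `L.pa Y Z`. -/
def Lpa (L : LD C) (Y : C) : ZW C → C
  | .nil => Y
  | .pa A w => L.pa A (Lpa L Y w)
  | .painv _ w => Lpa L Y w
  | .dl A w => L.ot A (Lpa L Y w)
  | .dr _ w => Lpa L Y w

/-- The functor `R^f_u` (object part), for `f` with target `L.pa Y Z`. -/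
def Rpa (L : LD C) (Z : C) : ZW C → C
  | .nil => Z
  | .pa _ w => Rpa L Z w
  | .painv A w => L.pa (Rpa L Z w) A
  | .dl _ w => Rpa L Z w
  | .dr A w => L.ot (Rpa L Z w) A

/-- The natural transformation `κ^f_u` (componentwise). -/
def kappa (L : LD C) {X Y Z : C} (f : X ⟶ L.pa Y Z) :
    (w : ZW C) → (Hpa L X w ⟶ L.pa (Lpa L Y w) (Rpa L Z w))
  | .nil => f
  | .pa A w => L.paHom (𝟙 A) (kappa L f w) ≫ L.pα A (Lpa L Y w) (Rpa L Z w)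
  | .painv A w => L.paHom (kappa L f w) (𝟙 A) ≫ L.pαInv (Lpa L Y w) (Rpa L Z w) A
  | .dl A w => L.otHom (𝟙 A) (kappa L f w) ≫ L.δl A (Lpa L Y w) (Rpa L Z w)
  | .dr A w => L.otHom (kappa L f w) (𝟙 A) ≫ L.δr (Lpa L Y w) (Rpa L Z w) A

/-- `h` is a component of the associator `α`. -/
def IsAlphaComp (L : LD C) {W T : C} (h : W ⟶ T) : Prop :=
  ∃ (A B E : C) (h₁ : W = L.ot A (L.ot B E)) (h₂ : L.ot (L.ot A B) E = T),
    h = eqToHom h₁ ≫ L.α A B E ≫ eqToHom h₂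

/-- `h` is a component of the inverse associator `α⁻¹`. -/
def IsAlphaInvComp (L : LD C) {W T : C} (h : W ⟶ T) : Prop :=
  ∃ (A B E : C) (h₁ : W = L.ot (L.ot A B) E) (h₂ : L.ot A (L.ot B E) = T),
    h = eqToHom h₁ ≫ L.αInv A B E ≫ eqToHom h₂

/-- `h` is a component of the associator `ᾱ`. -/
def IsPalphaComp (L : LD C) {W T : C} (h : W ⟶ T) : Prop :=
  ∃ (A B E : C) (h₁ : W = L.pa A (L.pa B E)) (h₂ : L.pa (L.pa A B) E = T),
    h = eqToHom h₁ ≫ L.pα A B E ≫ eqToHom h₂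

/-- `h` is a component of the inverse associator `ᾱ⁻¹`. -/
def IsPalphaInvComp (L : LD C) {W T : C} (h : W ⟶ T) : Prop :=
  ∃ (A B E : C) (h₁ : W = L.pa (L.pa A B) E) (h₂ : L.pa A (L.pa B E) = T),
    h = eqToHom h₁ ≫ L.pαInv A B E ≫ eqToHom h₂

/-- `h` is a component of the left distributor `δˡ`. -/
def IsDlComp (L : LD C) {W T : C} (h : W ⟶ T) : Prop :=
  ∃ (A B E : C) (h₁ : W = L.ot A (L.pa B E)) (h₂ : L.pa (L.ot A B) E = T),
    h = eqToHom h₁ ≫ L.δl A B E ≫ eqToHom h₂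

/-- `h` is a component of the right distributor `δʳ`. -/
def IsDrComp (L : LD C) {W T : C} (h : W ⟶ T) : Prop :=
  ∃ (A B E : C) (h₁ : W = L.ot (L.pa A B) E) (h₂ : L.pa A (L.ot B E) = T),
    h = eqToHom h₁ ≫ L.δr A B E ≫ eqToHom h₂

/-- `h` is of the form `id_A ⅋ h'` for some morphism `h'`. -/
def IsIdPaLeft (L : LD C) {W T : C} (h : W ⟶ T) : Prop :=
  ∃ (A W' T' : C) (h' : W' ⟶ T') (h₁ : W = L.pa A W') (h₂ : L.pa A T' = T),
    h = eqToHom h₁ ≫ L.paHom (𝟙 A) h' ≫ eqToHom h₂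

/-- `h` is of the form `h' ⅋ id_A` for some morphism `h'`. -/
def IsIdPaRight (L : LD C) {W T : C} (h : W ⟶ T) : Prop :=
  ∃ (A W' T' : C) (h' : W' ⟶ T') (h₁ : W = L.pa W' A) (h₂ : L.pa T' A = T),
    h = eqToHom h₁ ≫ L.paHom h' (𝟙 A) ≫ eqToHom h₂

/-- The set `Id^⊗` of identities of ⊗-products, as a set of morphisms into ⊗-products. -/
def IdOtSet (L : LD C) ⦃X Y Z : C⦄ (f : X ⟶ L.ot Y Z) : Prop :=
  ∃ hE : X = L.ot Y Z, f = eqToHom hE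

/-- The set `Id^⅋` of identities of ⅋-products, as a set of morphisms into ⅋-products. -/
def IdPaSet (L : LD C) ⦃X Y Z : C⦄ (f : X ⟶ L.pa Y Z) : Prop :=
  ∃ hE : X = L.pa Y Z, f = eqToHom hE

/-- `𝔣`-analysability for a set `𝔣` of morphisms whose targets are ⊗-products:
`g = (g' ⊗ g'') ∘ τ^f_u(Ā)` for some `f ∈ 𝔣`, word `u`, vector `Ā` and morphisms `g', g''`. -/
def OtAnalysable (L : LD C) (𝔣 : ∀ ⦃X Y Z : C⦄, (X ⟶ L.ot Y Z) → Prop)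
    {P T : C} (g : P ⟶ T) : Prop :=
  ∃ (X Y Z : C) (f : X ⟶ L.ot Y Z), 𝔣 f ∧
    ∃ (w : YW C) (Q₁ Q₂ : C) (g' : Lot L Y w ⟶ Q₁) (g'' : Rot L Z w ⟶ Q₂)
      (hP : P = Hot L X w) (hT : L.ot Q₁ Q₂ = T),
      g = eqToHom hP ≫ tau L f w ≫ L.otHom g' g'' ≫ eqToHom hT

/-- `𝔣`-analysability for a set `𝔣` of morphisms whose targets are ⅋-products:
`g = (g' ⅋ g'') ∘ κ^f_u(Ā)` for some `f ∈ 𝔣`, word `u`, vector `Ā` and morphisms `g', g''`. -/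
def PaAnalysable (L : LD C) (𝔣 : ∀ ⦃X Y Z : C⦄, (X ⟶ L.pa Y Z) → Prop)
    {P T : C} (g : P ⟶ T) : Prop :=
  ∃ (X Y Z : C) (f : X ⟶ L.pa Y Z), 𝔣 f ∧
    ∃ (w : ZW C) (Q₁ Q₂ : C) (g' : Lpa L Y w ⟶ Q₁) (g'' : Rpa L Z w ⟶ Q₂)
      (hP : P = Hpa L X w) (hT : L.pa Q₁ Q₂ = T),
      g = eqToHom hP ≫ kappa L f w ≫ L.paHom g' g'' ≫ eqToHom hT

/-- Atomic morphisms of a (tidy) LD category. -/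
inductive Atomic (L : LD C) : ∀ {W T : C}, (W ⟶ T) → Prop
  | alpha (A B E : C) : Atomic L (L.α A B E)
  | alphaInv (A B E : C) : Atomic L (L.αInv A B E)
  | palpha (A B E : C) : Atomic L (L.pα A B E)
  | palphaInv (A B E : C) : Atomic L (L.pαInv A B E)
  | dl (A B E : C) : Atomic L (L.δl A B E)
  | dr (A B E : C) : Atomic L (L.δr A B E)
  | otRightId {W T : C} (f : W ⟶ T) (A : C) : Atomic L f → Atomic L (L.otHom f (𝟙 A))
  | otLeftId {W T : C} (f : W ⟶ T) (A : C) : Atomic L f → Atomic L (L.otHom (𝟙 A) f)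
  | paRightId {W T : C} (f : W ⟶ T) (A : C) : Atomic L f → Atomic L (L.paHom f (𝟙 A))
  | paLeftId {W T : C} (f : W ⟶ T) (A : C) : Atomic L f → Atomic L (L.paHom (𝟙 A) f)

/-- Elementary morphisms: identities and finite composites of atomic morphisms. -/
inductive Elementary (L : LD C) : ∀ {W T : C}, (W ⟶ T) → Prop
  | id (X : C) : Elementary L (𝟙 X)
  | of {W T : C} {f : W ⟶ T} : Atomic L f → Elementary L f
  | comp {W T U : C} {f : W ⟶ T} {g : T ⟶ U} :
      Elementary L f → Elementary L g → Elementary L (f ≫ g)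

/-- A strict Frobenius linearly distributive functor between LD categories. -/
structure StrictLDFunctor (Cc : Type u₁) [Category.{v₁} Cc] (Dd : Type u₂) [Category.{v₂} Dd]
    (LC : LD Cc) (LDd : LD Dd) where
  toFunctor : Cc ⥤ Dd
  obj_ot : ∀ X Y : Cc, toFunctor.obj (LC.ot X Y) = LDd.ot (toFunctor.obj X) (toFunctor.obj Y)
  obj_pa : ∀ X Y : Cc, toFunctor.obj (LC.pa X Y) = LDd.pa (toFunctor.obj X) (toFunctor.obj Y)
  map_ot : ∀ {X₁ Y₁ X₂ Y₂ : Cc} (f : X₁ ⟶ Y₁) (g : X₂ ⟶ Y₂),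
    toFunctor.map (LC.otHom f g) =
      eqToHom (obj_ot X₁ X₂) ≫ LDd.otHom (toFunctor.map f) (toFunctor.map g) ≫
        eqToHom (obj_ot Y₁ Y₂).symm
  map_pa : ∀ {X₁ Y₁ X₂ Y₂ : Cc} (f : X₁ ⟶ Y₁) (g : X₂ ⟶ Y₂),
    toFunctor.map (LC.paHom f g) =
      eqToHom (obj_pa X₁ X₂) ≫ LDd.paHom (toFunctor.map f) (toFunctor.map g) ≫
        eqToHom (obj_pa Y₁ Y₂).symm
  map_α : ∀ A B E : Cc,
    toFunctor.map (LC.α A B E) =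
      eqToHom (by simp only [obj_ot]) ≫
        LDd.α (toFunctor.obj A) (toFunctor.obj B) (toFunctor.obj E) ≫
        eqToHom (by simp only [obj_ot])
  map_αInv : ∀ A B E : Cc,
    toFunctor.map (LC.αInv A B E) =
      eqToHom (by simp only [obj_ot]) ≫
        LDd.αInv (toFunctor.obj A) (toFunctor.obj B) (toFunctor.obj E) ≫
        eqToHom (by simp only [obj_ot])
  map_pα : ∀ A B E : Cc,
    toFunctor.map (LC.pα A B E) =
      eqToHom (by simp only [obj_pa]) ≫
        LDd.pα (toFunctor.obj A) (toFunctor.obj B) (toFunctor.obj E) ≫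
        eqToHom (by simp only [obj_pa])
  map_pαInv : ∀ A B E : Cc,
    toFunctor.map (LC.pαInv A B E) =
      eqToHom (by simp only [obj_pa]) ≫
        LDd.pαInv (toFunctor.obj A) (toFunctor.obj B) (toFunctor.obj E) ≫
        eqToHom (by simp only [obj_pa])
  map_δl : ∀ A B E : Cc,
    toFunctor.map (LC.δl A B E) =
      eqToHom (by simp only [obj_ot, obj_pa]) ≫
        LDd.δl (toFunctor.obj A) (toFunctor.obj B) (toFunctor.obj E) ≫
        eqToHom (by simp only [obj_ot, obj_pa])
  map_δr : ∀ A B E : Cc,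
    toFunctor.map (LC.δr A B E) =
      eqToHom (by simp only [obj_ot, obj_pa]) ≫
        LDd.δr (toFunctor.obj A) (toFunctor.obj B) (toFunctor.obj E) ≫
        eqToHom (by simp only [obj_ot, obj_pa])

/-- A (unitless) Frobenius linearly distributive functor between LD categories. -/
structure FrobLDFunctor (Cc : Type u₁) [Category.{v₁} Cc] (Dd : Type u₂) [Category.{v₂} Dd]
    (LC : LD Cc) (LDd : LD Dd) where
  toFunctor : Cc ⥤ Dd
  μ : ∀ X Y : Cc, LDd.ot (toFunctor.obj X) (toFunctor.obj Y) ⟶ toFunctor.obj (LC.ot X Y)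
  Δ : ∀ X Y : Cc, toFunctor.obj (LC.pa X Y) ⟶ LDd.pa (toFunctor.obj X) (toFunctor.obj Y)
  μ_natural : ∀ {X₁ Y₁ X₂ Y₂ : Cc} (f : X₁ ⟶ Y₁) (g : X₂ ⟶ Y₂),
    LDd.otHom (toFunctor.map f) (toFunctor.map g) ≫ μ Y₁ Y₂ =
      μ X₁ X₂ ≫ toFunctor.map (LC.otHom f g)
  Δ_natural : ∀ {X₁ Y₁ X₂ Y₂ : Cc} (f : X₁ ⟶ Y₁) (g : X₂ ⟶ Y₂),
    toFunctor.map (LC.paHom f g) ≫ Δ Y₁ Y₂ =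
      Δ X₁ X₂ ≫ LDd.paHom (toFunctor.map f) (toFunctor.map g)
  H1 : ∀ A B E : Cc,
    LDd.α (toFunctor.obj A) (toFunctor.obj B) (toFunctor.obj E) ≫
        LDd.otHom (μ A B) (𝟙 (toFunctor.obj E)) ≫ μ (LC.ot A B) E =
      LDd.otHom (𝟙 (toFunctor.obj A)) (μ B E) ≫ μ A (LC.ot B E) ≫ toFunctor.map (LC.α A B E)
  H2 : ∀ A B E : Cc,
    LDd.otHom (𝟙 (toFunctor.obj A)) (Δ B E) ≫
        LDd.δl (toFunctor.obj A) (toFunctor.obj B) (toFunctor.obj E) ≫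
        LDd.paHom (μ A B) (𝟙 (toFunctor.obj E)) =
      μ A (LC.pa B E) ≫ toFunctor.map (LC.δl A B E) ≫ Δ (LC.ot A B) E
  H3 : ∀ A B E : Cc,
    LDd.otHom (Δ A B) (𝟙 (toFunctor.obj E)) ≫
        LDd.δr (toFunctor.obj A) (toFunctor.obj B) (toFunctor.obj E) ≫
        LDd.paHom (𝟙 (toFunctor.obj A)) (μ B E) =
      μ (LC.pa A B) E ≫ toFunctor.map (LC.δr A B E) ≫ Δ A (LC.ot B E)
  H4 : ∀ A B E : Cc,
    Δ A (LC.pa B E) ≫ LDd.paHom (𝟙 (toFunctor.obj A)) (Δ B E) ≫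
        LDd.pα (toFunctor.obj A) (toFunctor.obj B) (toFunctor.obj E) =
      toFunctor.map (LC.pα A B E) ≫ Δ (LC.pa A B) E ≫
        LDd.paHom (Δ A B) (𝟙 (toFunctor.obj E))

variable {Cc : Type u₁} [Category.{v₁} Cc] {Dd : Type u₂} [Category.{v₂} Dd]
  {LC : LD Cc} {LDd : LD Dd}

/-- Tidiness of a Frobenius LD functor: the image of an object is never a tensor product. -/
def FrobLDFunctor.TidyF (F : FrobLDFunctor Cc Dd LC LDd) : Prop :=
  ∀ (A : Cc) (P Q : Dd),
    F.toFunctor.obj A ≠ LDd.ot P Q ∧ F.toFunctor.obj A ≠ LDd.pa P Q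

/-- Multiplicative morphisms of the target category of a Frobenius LD functor. -/
inductive Multiplicative (F : FrobLDFunctor Cc Dd LC LDd) : ∀ {W T : Dd}, (W ⟶ T) → Prop
  | id (X : Cc) : Multiplicative F (𝟙 (F.toFunctor.obj X))
  | mu {W₁ W₂ : Dd} {X Y : Cc} (f : W₁ ⟶ F.toFunctor.obj X) (g : W₂ ⟶ F.toFunctor.obj Y) :
      Multiplicative F f → Multiplicative F g →
      Multiplicative F (LDd.otHom f g ≫ F.μ X Y)

/-- `F`-atomic morphisms of the target category of a Frobenius LD functor. -/
inductive FAtomic (F : FrobLDFunctor Cc Dd LC LDd) : ∀ {W T : Dd}, (W ⟶ T) → Prop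
  | alpha (A B E : Dd) : FAtomic F (LDd.α A B E)
  | alphaInv (A B E : Dd) : FAtomic F (LDd.αInv A B E)
  | palpha (A B E : Dd) : FAtomic F (LDd.pα A B E)
  | palphaInv (A B E : Dd) : FAtomic F (LDd.pαInv A B E)
  | dl (A B E : Dd) : FAtomic F (LDd.δl A B E)
  | dr (A B E : Dd) : FAtomic F (LDd.δr A B E)
  | mu (X Y : Cc) : FAtomic F (F.μ X Y)
  | delta (X Y : Cc) : FAtomic F (F.Δ X Y)
  | map {X Y : Cc} (f : X ⟶ Y) : Elementary LC f → FAtomic F (F.toFunctor.map f)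
  | otRightId {W T : Dd} (f : W ⟶ T) (A : Dd) : FAtomic F f → FAtomic F (LDd.otHom f (𝟙 A))
  | otLeftId {W T : Dd} (f : W ⟶ T) (A : Dd) : FAtomic F f → FAtomic F (LDd.otHom (𝟙 A) f)
  | paRightId {W T : Dd} (f : W ⟶ T) (A : Dd) : FAtomic F f → FAtomic F (LDd.paHom f (𝟙 A))
  | paLeftId {W T : Dd} (f : W ⟶ T) (A : Dd) : FAtomic F f → FAtomic F (LDd.paHom (𝟙 A) f)

/-- `F`-elementary morphisms: identities and finite composites of `F`-atomic morphisms. -/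
inductive FElementary (F : FrobLDFunctor Cc Dd LC LDd) : ∀ {W T : Dd}, (W ⟶ T) → Prop
  | id (X : Dd) : FElementary F (𝟙 X)
  | of {W T : Dd} {f : W ⟶ T} : FAtomic F f → FElementary F f
  | comp {W T U : Dd} {f : W ⟶ T} {g : T ⟶ U} :
      FElementary F f → FElementary F g → FElementary F (f ≫ g)

/-- The set `𝔡` of morphisms of the form `Δ ∘ F(κ^i_u(X̄))`, where `i` is the identity of a
⅋-product of the source category. -/
def frakD (F : FrobLDFunctor Cc Dd LC LDd) ⦃P Q₁ Q₂ : Dd⦄ (g : P ⟶ LDd.pa Q₁ Q₂) : Prop :=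
  ∃ (Y Z : Cc) (w : ZW Cc) (hP : P = F.toFunctor.obj (Hpa LC (LC.pa Y Z) w))
    (h₁ : F.toFunctor.obj (Lpa LC Y w) = Q₁) (h₂ : F.toFunctor.obj (Rpa LC Z w) = Q₂),
    g = eqToHom hP ≫ F.toFunctor.map (kappa LC (𝟙 (LC.pa Y Z)) w) ≫
        F.Δ (Lpa LC Y w) (Rpa LC Z w) ≫ eqToHom (by rw [h₁, h₂])

/-! Each relation with `α` follows from naturality of `α`, which moves it past the inner
`τ^f_u`, and the pentagon (P1): as stated for (1), rearranged for (2) and (3). The relations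
with `α⁻¹` are the same commutative squares with their horizontal isomorphisms inverted. -/

namespace LD

variable (L : LD C)

theorem otHom_id_comp {A X Y Z : C} (g : X ⟶ Y) (h : Y ⟶ Z) :
    L.otHom (𝟙 A) (g ≫ h) = L.otHom (𝟙 A) g ≫ L.otHom (𝟙 A) h := by
  rw [← L.otHom_comp, Category.id_comp]

theorem otHom_comp_id {A X Y Z : C} (g : X ⟶ Y) (h : Y ⟶ Z) :
    L.otHom (g ≫ h) (𝟙 A) = L.otHom g (𝟙 A) ≫ L.otHom h (𝟙 A) := by
  rw [← L.otHom_comp, Category.id_comp]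

theorem α_comp_otHom_id_right {A B E E' : C} (h : E ⟶ E') :
    L.α A B E ≫ L.otHom (𝟙 (L.ot A B)) h =
      L.otHom (𝟙 A) (L.otHom (𝟙 B) h) ≫ L.α A B E' := by
  rw [L.α_natural, L.otHom_id]

theorem α_comp_otHom_id_middle {A B B' E : C} (g : B ⟶ B') :
    L.α A B E ≫ L.otHom (L.otHom (𝟙 A) g) (𝟙 E) =
      L.otHom (𝟙 A) (L.otHom g (𝟙 E)) ≫ L.α A B' E := by
  rw [L.α_natural]

theorem α_comp_otHom_id_left {A A' B E : C} (g : A ⟶ A') :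
    L.α A B E ≫ L.otHom (L.otHom g (𝟙 B)) (𝟙 E) =
      L.otHom g (𝟙 (L.ot B E)) ≫ L.α A' B E := by
  rw [← L.otHom_id B E, L.α_natural]

def αIso (A B E : C) : L.ot A (L.ot B E) ≅ L.ot (L.ot A B) E :=
  ⟨L.α A B E, L.αInv A B E, L.α_αInv A B E, L.αInv_α A B E⟩

def otIso {X₁ Y₁ X₂ Y₂ : C} (e₁ : X₁ ≅ Y₁) (e₂ : X₂ ≅ Y₂) : L.ot X₁ X₂ ≅ L.ot Y₁ Y₂ where
  hom := L.otHom e₁.hom e₂.hom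
  inv := L.otHom e₁.inv e₂.inv
  hom_inv_id := by rw [← L.otHom_comp, e₁.hom_inv_id, e₂.hom_inv_id, L.otHom_id]
  inv_hom_id := by rw [← L.otHom_comp, e₁.inv_hom_id, e₂.inv_hom_id, L.otHom_id]

theorem α_comp_otHom_α_comp_αInv (A B E D : C) :
    L.α A (L.ot B E) D ≫ L.otHom (L.α A B E) (𝟙 D) ≫ L.αInv (L.ot A B) E D =
      L.otHom (𝟙 A) (L.αInv B E D) ≫ L.α A B (L.ot E D) := by
  refine (Iso.eq_inv_comp (L.otIso (Iso.refl A) (L.αIso B E D))).mpr ?_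
  simp only [← Category.assoc]
  refine (Iso.comp_inv_eq (L.αIso (L.ot A B) E D)).mpr ?_
  simp only [Category.assoc]
  exact (L.P1 A B E D).symm

theorem α_comp_otHom_αInv_comp_αInv (A B E D : C) :
    L.α (L.ot A B) E D ≫ L.otHom (L.αInv A B E) (𝟙 D) ≫ L.αInv A (L.ot B E) D =
      L.αInv A B (L.ot E D) ≫ L.otHom (𝟙 A) (L.α B E D) := by
  refine (Iso.eq_inv_comp (L.αIso A B (L.ot E D))).mpr ?_
  simp only [← Category.assoc]
  refine (Iso.comp_inv_eq (L.αIso A (L.ot B E) D)).mpr ?_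
  refine (Iso.comp_inv_eq (L.otIso (L.αIso A B E) (Iso.refl D))).mpr ?_
  simp only [Category.assoc]
  exact L.P1 A B E D

end LD

section Tau

variable (L : LD C) {X Y Z : C} (f : X ⟶ L.ot Y Z) (w : YW C)

theorem α_comp_tau_a_ot (A₁ A₂ : C) :
    L.α A₁ A₂ (Hot L X w) ≫ tau L f (YW.a (L.ot A₁ A₂) w) =
      tau L f (YW.a A₁ (YW.a A₂ w)) ≫ L.otHom (L.α A₁ A₂ (Lot L Y w)) (𝟙 (Rot L Z w)) := by
  simp only [tau, Hot, Lot, Rot, L.otHom_id_comp, Category.assoc]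
  rw [reassoc_of% L.α_comp_otHom_id_right, L.P1]

theorem α_comp_tau_ainv_a (A B : C) :
    L.α A (Hot L X w) B ≫ tau L f (YW.ainv B (YW.a A w)) = tau L f (YW.a A (YW.ainv B w)) := by
  simp only [tau, Hot, Lot, Rot, L.otHom_id_comp, L.otHom_comp_id, Category.assoc]
  rw [reassoc_of% L.α_comp_otHom_id_middle, L.α_comp_otHom_α_comp_αInv]

theorem α_comp_tau_ainv_ainv (A B : C) :
    L.α (Hot L X w) A B ≫ tau L f (YW.ainv B (YW.ainv A w)) =
      tau L f (YW.ainv (L.ot A B) w) ≫ L.otHom (𝟙 (Lot L Y w)) (L.α (Rot L Z w) A B) := by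
  simp only [tau, Hot, Lot, Rot, L.otHom_comp_id, Category.assoc]
  rw [reassoc_of% L.α_comp_otHom_id_left, L.α_comp_otHom_αInv_comp_αInv]

theorem αInv_comp_tau_ainv_ot (A B : C) :
    L.αInv (Hot L X w) A B ≫ tau L f (YW.ainv (L.ot A B) w) =
      tau L f (YW.ainv B (YW.ainv A w)) ≫ L.otHom (𝟙 (Lot L Y w)) (L.αInv (Rot L Z w) A B) :=
  (CommSq.horiz_inv (f := L.αIso _ A B) (i := L.otIso (Iso.refl _) (L.αIso _ A B))
    ⟨α_comp_tau_ainv_ainv L f w A B⟩).w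

theorem αInv_comp_tau_a_ainv (A B : C) :
    L.αInv A (Hot L X w) B ≫ tau L f (YW.a A (YW.ainv B w)) = tau L f (YW.ainv B (YW.a A w)) :=
  (Iso.inv_comp_eq (L.αIso A _ B)).mpr (α_comp_tau_ainv_a L f w A B).symm

theorem αInv_comp_tau_a_a (A₁ A₂ : C) :
    L.αInv A₁ A₂ (Hot L X w) ≫ tau L f (YW.a A₁ (YW.a A₂ w)) =
      tau L f (YW.a (L.ot A₁ A₂) w) ≫ L.otHom (L.αInv A₁ A₂ (Lot L Y w)) (𝟙 (Rot L Z w)) :=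
  (CommSq.horiz_inv (f := L.αIso A₁ A₂ _) (i := L.otIso (L.αIso A₁ A₂ _) (Iso.refl _))
    ⟨α_comp_tau_a_ot L f w A₁ A₂⟩).w

end Tau

theorem tau_relations_general {C : Type u} [Category.{v} C] (L : LD C)
    {X Y Z : C} (f : X ⟶ L.ot Y Z) :
    (∀ (w : YW C) (A₁ A₂ : C),
      L.α A₁ A₂ (Hot L X w) ≫ tau L f (YW.a (L.ot A₁ A₂) w) =
        tau L f (YW.a A₁ (YW.a A₂ w)) ≫
          L.otHom (L.α A₁ A₂ (Lot L Y w)) (𝟙 (Rot L Z w))) ∧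
    (∀ (w : YW C) (A B : C),
      L.α A (Hot L X w) B ≫ tau L f (YW.ainv B (YW.a A w)) =
        tau L f (YW.a A (YW.ainv B w))) ∧
    (∀ (w : YW C) (A B : C),
      L.α (Hot L X w) A B ≫ tau L f (YW.ainv B (YW.ainv A w)) =
        tau L f (YW.ainv (L.ot A B) w) ≫
          L.otHom (𝟙 (Lot L Y w)) (L.α (Rot L Z w) A B)) ∧
    (∀ (w : YW C) (A B : C),
      L.αInv (Hot L X w) A B ≫ tau L f (YW.ainv (L.ot A B) w) =
        tau L f (YW.ainv B (YW.ainv A w)) ≫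
          L.otHom (𝟙 (Lot L Y w)) (L.αInv (Rot L Z w) A B)) ∧
    (∀ (w : YW C) (A B : C),
      L.αInv A (Hot L X w) B ≫ tau L f (YW.a A (YW.ainv B w)) =
        tau L f (YW.ainv B (YW.a A w))) ∧
    (∀ (w : YW C) (A₁ A₂ : C),
      L.αInv A₁ A₂ (Hot L X w) ≫ tau L f (YW.a A₁ (YW.a A₂ w)) =
        tau L f (YW.a (L.ot A₁ A₂) w) ≫
          L.otHom (L.αInv A₁ A₂ (Lot L Y w)) (𝟙 (Rot L Z w))) :=
  ⟨α_comp_tau_a_ot L f, α_comp_tau_ainv_a L f, α_comp_tau_ainv_ainv L f,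
    αInv_comp_tau_ainv_ot L f, αInv_comp_tau_a_ainv L f, αInv_comp_tau_a_a L f⟩

/-- The six relations satisfied by the family `(τ^f_u)` in a tidy LD category
(Lemma "pushing τ through"). -/
theorem tau_relations {C : Type u} [Category.{v} C] (L : LD C) (hTidy : L.Tidy)
    {X Y Z : C} (f : X ⟶ L.ot Y Z) :
    (∀ (w : YW C) (A₁ A₂ : C),
      L.α A₁ A₂ (Hot L X w) ≫ tau L f (YW.a (L.ot A₁ A₂) w) =
        tau L f (YW.a A₁ (YW.a A₂ w)) ≫
          L.otHom (L.α A₁ A₂ (Lot L Y w)) (𝟙 (Rot L Z w))) ∧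
    (∀ (w : YW C) (A B : C),
      L.α A (Hot L X w) B ≫ tau L f (YW.ainv B (YW.a A w)) =
        tau L f (YW.a A (YW.ainv B w))) ∧
    (∀ (w : YW C) (A B : C),
      L.α (Hot L X w) A B ≫ tau L f (YW.ainv B (YW.ainv A w)) =
        tau L f (YW.ainv (L.ot A B) w) ≫
          L.otHom (𝟙 (Lot L Y w)) (L.α (Rot L Z w) A B)) ∧
    (∀ (w : YW C) (A B : C),
      L.αInv (Hot L X w) A B ≫ tau L f (YW.ainv (L.ot A B) w) =
        tau L f (YW.ainv B (YW.ainv A w)) ≫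
          L.otHom (𝟙 (Lot L Y w)) (L.αInv (Rot L Z w) A B)) ∧
    (∀ (w : YW C) (A B : C),
      L.αInv A (Hot L X w) B ≫ tau L f (YW.a A (YW.ainv B w)) =
        tau L f (YW.ainv B (YW.a A w))) ∧
    (∀ (w : YW C) (A₁ A₂ : C),
      L.αInv A₁ A₂ (Hot L X w) ≫ tau L f (YW.a A₁ (YW.a A₂ w)) =
        tau L f (YW.a (L.ot A₁ A₂) w) ≫
          L.otHom (L.αInv A₁ A₂ (Lot L Y w)) (𝟙 (Rot L Z w))) :=
  tau_relations_general L f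

end LDCoherence
end

section
/- In a tidy LD category C, for every morphism f : H → L⅋R into a ⅋-product, the family (κ^f_u)_{u∈𝔝} satisfies the following six relations, as equalities of composites of components for all words u ∈ 𝔝 and all vectors of objects (components of ᾱ, ᾱ⁻¹ and identities being the evident ones making both sides parallel): (1) κ^f_{ā·u}∘ᾱ = (ᾱ⅋id)∘κ^f_{ā·ā·u}; (2) κ^f_{ā⁻¹·ā·u}∘ᾱ = κ^f_{ā·ā⁻¹·u}; (3) κ^f_{ā⁻¹·ā⁻¹·u}∘ᾱ = (id⅋ᾱ)∘κ^f_{ā⁻¹·u}; (4) κ^f_{ā⁻¹·u}∘ᾱ⁻¹ = (id⅋ᾱ⁻¹)∘κ^f_{ā⁻¹·ā⁻¹·u}; (5) κ^f_{ā·ā⁻¹·u}∘ᾱ⁻¹ = κ^f_{ā⁻¹·ā·u}; (6) κ^f_{ā·ā·u}∘ᾱ⁻¹ = (ᾱ⁻¹⅋id)∘κ^f_{ā·u}. -/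
open CategoryTheory

namespace LDCoherence

universe v u v₁ u₁ v₂ u₂

variable {C : Type u} [Category.{v} C]

variable {Cc : Type u₁} [Category.{v₁} Cc] {Dd : Type u₂} [Category.{v₂} Dd]
  {LC : LD Cc} {LDd : LD Dd}

/-! The relations involve only the two outermost letters, so `κ_u` may be replaced by any
morphism `g` into a ⅋-product: (1)–(3) then follow from naturality of `ᾱ` and the pentagon (P8),
and (4)–(6) are (1)–(3) with the isomorphisms `ᾱ` inverted. -/

section Associators

variable (L : LD C)

def LD.pαIso (A B E : C) : L.pa A (L.pa B E) ≅ L.pa (L.pa A B) E :=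
  ⟨L.pα A B E, L.pαInv A B E, L.pα_pαInv A B E, L.pαInv_pα A B E⟩

def LD.paMapIso {X₁ Y₁ X₂ Y₂ : C} (e₁ : X₁ ≅ Y₁) (e₂ : X₂ ≅ Y₂) : L.pa X₁ X₂ ≅ L.pa Y₁ Y₂ where
  hom := L.paHom e₁.hom e₂.hom
  inv := L.paHom e₁.inv e₂.inv
  hom_inv_id := by rw [← L.paHom_comp, e₁.hom_inv_id, e₂.hom_inv_id, L.paHom_id]
  inv_hom_id := by rw [← L.paHom_comp, e₁.inv_hom_id, e₂.inv_hom_id, L.paHom_id]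

lemma LD.paHom_id_comp {W T U : C} (A : C) (g : W ⟶ T) (h : T ⟶ U) :
    L.paHom (𝟙 A) (g ≫ h) = L.paHom (𝟙 A) g ≫ L.paHom (𝟙 A) h := by
  rw [← L.paHom_comp, Category.id_comp]

lemma LD.paHom_comp_id {W T U : C} (A : C) (g : W ⟶ T) (h : T ⟶ U) :
    L.paHom (g ≫ h) (𝟙 A) = L.paHom g (𝟙 A) ≫ L.paHom h (𝟙 A) := by
  rw [← L.paHom_comp, Category.id_comp]

/-- The step `κ_u ↦ κ_{ā·u}`. -/
def LD.extendLeft (A : C) {W P Q : C} (g : W ⟶ L.pa P Q) : L.pa A W ⟶ L.pa (L.pa A P) Q :=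
  L.paHom (𝟙 A) g ≫ L.pα A P Q

/-- The step `κ_u ↦ κ_{ā⁻¹·u}`. -/
def LD.extendRight (A : C) {W P Q : C} (g : W ⟶ L.pa P Q) : L.pa W A ⟶ L.pa P (L.pa Q A) :=
  L.paHom g (𝟙 A) ≫ L.pαInv P Q A

variable {W P Q : C} (g : W ⟶ L.pa P Q)

lemma LD.pα_comp_extendLeft_pa (A₁ A₂ : C) :
    L.pα A₁ A₂ W ≫ L.extendLeft (L.pa A₁ A₂) g =
      L.extendLeft A₁ (L.extendLeft A₂ g) ≫ L.paHom (L.pα A₁ A₂ P) (𝟙 Q) := by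
  have hnat := L.pα_natural (𝟙 A₁) (𝟙 A₂) g
  rw [L.paHom_id] at hnat
  simp only [LD.extendLeft, L.paHom_id_comp, Category.assoc]
  rw [← Category.assoc, ← hnat, Category.assoc, L.P8]

lemma LD.pα_comp_extendRight_extendLeft (A B : C) :
    L.pα A W B ≫ L.extendRight B (L.extendLeft A g) = L.extendLeft A (L.extendRight B g) := by
  have hpent : L.pα A (L.pa P Q) B ≫ L.paHom (L.pα A P Q) (𝟙 B) =
      L.paHom (𝟙 A) (L.pαInv P Q B) ≫ L.pα A P (L.pa Q B) ≫ L.pα (L.pa A P) Q B := by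
    rw [L.P8, ← Category.assoc, ← L.paHom_comp, L.pαInv_pα, Category.comp_id, L.paHom_id,
      Category.id_comp]
  simp only [LD.extendLeft, LD.extendRight, L.paHom_id_comp, L.paHom_comp_id, Category.assoc]
  rw [← Category.assoc, ← L.pα_natural, Category.assoc, ← Category.assoc (L.pα _ _ _), hpent]
  simp only [Category.assoc, L.pα_pαInv, Category.comp_id]

lemma LD.pα_comp_extendRight_extendRight (A B : C) :
    L.pα W A B ≫ L.extendRight B (L.extendRight A g) =
      L.extendRight (L.pa A B) g ≫ L.paHom (𝟙 P) (L.pα Q A B) := by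
  have hnat := L.pα_natural g (𝟙 A) (𝟙 B)
  rw [L.paHom_id] at hnat
  have hpent : L.pα (L.pa P Q) A B =
      L.pαInv P Q (L.pa A B) ≫ L.paHom (𝟙 P) (L.pα Q A B) ≫
        L.pα P (L.pa Q A) B ≫ L.paHom (L.pα P Q A) (𝟙 B) := by
    rw [← L.P8, ← Category.assoc, L.pαInv_pα, Category.id_comp]
  simp only [LD.extendRight, L.paHom_comp_id, Category.assoc]
  rw [← Category.assoc, ← hnat, Category.assoc, hpent]
  simp only [Category.assoc]
  rw [← Category.assoc (L.paHom (L.pα P Q A) _), ← L.paHom_comp_id, L.pα_pαInv, L.paHom_id,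
    Category.id_comp, L.pα_pαInv, Category.comp_id]

lemma LD.pαInv_comp_extendLeft_pa (A₁ A₂ : C) :
    L.pαInv A₁ A₂ W ≫ L.extendLeft A₁ (L.extendLeft A₂ g) =
      L.extendLeft (L.pa A₁ A₂) g ≫ L.paHom (L.pαInv A₁ A₂ P) (𝟙 Q) :=
  (CommSq.mk (L.pα_comp_extendLeft_pa g A₁ A₂)).horiz_inv
    (f := L.pαIso A₁ A₂ W) (i := L.paMapIso (L.pαIso A₁ A₂ P) (Iso.refl Q)) |>.w

lemma LD.pαInv_comp_extendLeft_extendRight (A B : C) :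
    L.pαInv A W B ≫ L.extendLeft A (L.extendRight B g) = L.extendRight B (L.extendLeft A g) :=
  ((L.pαIso A W B).inv_comp_eq).2 (L.pα_comp_extendRight_extendLeft g A B).symm

lemma LD.pαInv_comp_extendRight_pa (A B : C) :
    L.pαInv W A B ≫ L.extendRight (L.pa A B) g =
      L.extendRight B (L.extendRight A g) ≫ L.paHom (𝟙 P) (L.pαInv Q A B) :=
  (CommSq.mk (L.pα_comp_extendRight_extendRight g A B)).horiz_inv
    (f := L.pαIso W A B) (i := L.paMapIso (Iso.refl P) (L.pαIso Q A B)) |>.w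

end Associators

theorem kappa_relations_assoc_general {C : Type u} [Category.{v} C] (L : LD C)
    {X Y Z : C} (f : X ⟶ L.pa Y Z) :
    (∀ (w : ZW C) (A₁ A₂ : C),
      L.pα A₁ A₂ (Hpa L X w) ≫ kappa L f (ZW.pa (L.pa A₁ A₂) w) =
        kappa L f (ZW.pa A₁ (ZW.pa A₂ w)) ≫
          L.paHom (L.pα A₁ A₂ (Lpa L Y w)) (𝟙 (Rpa L Z w))) ∧
    (∀ (w : ZW C) (A B : C),
      L.pα A (Hpa L X w) B ≫ kappa L f (ZW.painv B (ZW.pa A w)) =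
        kappa L f (ZW.pa A (ZW.painv B w))) ∧
    (∀ (w : ZW C) (A B : C),
      L.pα (Hpa L X w) A B ≫ kappa L f (ZW.painv B (ZW.painv A w)) =
        kappa L f (ZW.painv (L.pa A B) w) ≫
          L.paHom (𝟙 (Lpa L Y w)) (L.pα (Rpa L Z w) A B)) ∧
    (∀ (w : ZW C) (A B : C),
      L.pαInv (Hpa L X w) A B ≫ kappa L f (ZW.painv (L.pa A B) w) =
        kappa L f (ZW.painv B (ZW.painv A w)) ≫
          L.paHom (𝟙 (Lpa L Y w)) (L.pαInv (Rpa L Z w) A B)) ∧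
    (∀ (w : ZW C) (A B : C),
      L.pαInv A (Hpa L X w) B ≫ kappa L f (ZW.pa A (ZW.painv B w)) =
        kappa L f (ZW.painv B (ZW.pa A w))) ∧
    (∀ (w : ZW C) (A₁ A₂ : C),
      L.pαInv A₁ A₂ (Hpa L X w) ≫ kappa L f (ZW.pa A₁ (ZW.pa A₂ w)) =
        kappa L f (ZW.pa (L.pa A₁ A₂) w) ≫
          L.paHom (L.pαInv A₁ A₂ (Lpa L Y w)) (𝟙 (Rpa L Z w))) :=
  ⟨fun w => L.pα_comp_extendLeft_pa (kappa L f w),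
    fun w => L.pα_comp_extendRight_extendLeft (kappa L f w),
    fun w => L.pα_comp_extendRight_extendRight (kappa L f w),
    fun w => L.pαInv_comp_extendRight_pa (kappa L f w),
    fun w => L.pαInv_comp_extendLeft_extendRight (kappa L f w),
    fun w => L.pαInv_comp_extendLeft_pa (kappa L f w)⟩

/-- The six relations satisfied by the family `(κ^f_u)` involving `ᾱ` and `ᾱ⁻¹`
(Lemma "pushing κ through"). -/
theorem kappa_relations_assoc {C : Type u} [Category.{v} C] (L : LD C) (hTidy : L.Tidy)
    {X Y Z : C} (f : X ⟶ L.pa Y Z) :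
    (∀ (w : ZW C) (A₁ A₂ : C),
      L.pα A₁ A₂ (Hpa L X w) ≫ kappa L f (ZW.pa (L.pa A₁ A₂) w) =
        kappa L f (ZW.pa A₁ (ZW.pa A₂ w)) ≫
          L.paHom (L.pα A₁ A₂ (Lpa L Y w)) (𝟙 (Rpa L Z w))) ∧
    (∀ (w : ZW C) (A B : C),
      L.pα A (Hpa L X w) B ≫ kappa L f (ZW.painv B (ZW.pa A w)) =
        kappa L f (ZW.pa A (ZW.painv B w))) ∧
    (∀ (w : ZW C) (A B : C),
      L.pα (Hpa L X w) A B ≫ kappa L f (ZW.painv B (ZW.painv A w)) =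
        kappa L f (ZW.painv (L.pa A B) w) ≫
          L.paHom (𝟙 (Lpa L Y w)) (L.pα (Rpa L Z w) A B)) ∧
    (∀ (w : ZW C) (A B : C),
      L.pαInv (Hpa L X w) A B ≫ kappa L f (ZW.painv (L.pa A B) w) =
        kappa L f (ZW.painv B (ZW.painv A w)) ≫
          L.paHom (𝟙 (Lpa L Y w)) (L.pαInv (Rpa L Z w) A B)) ∧
    (∀ (w : ZW C) (A B : C),
      L.pαInv A (Hpa L X w) B ≫ kappa L f (ZW.pa A (ZW.painv B w)) =
        kappa L f (ZW.painv B (ZW.pa A w))) ∧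
    (∀ (w : ZW C) (A₁ A₂ : C),
      L.pαInv A₁ A₂ (Hpa L X w) ≫ kappa L f (ZW.pa A₁ (ZW.pa A₂ w)) =
        kappa L f (ZW.pa (L.pa A₁ A₂) w) ≫
          L.paHom (L.pαInv A₁ A₂ (Lpa L Y w)) (𝟙 (Rpa L Z w))) :=
  kappa_relations_assoc_general L f

end LDCoherence
end
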